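/- Let 0 < p ≤ 1, let L_m, L_j be integers with 2 ≤ L_m ≤ L_j, and let f : ℕ → ℝ be nondecreasing and bounded. Then ∑_{l} p_l^{(L_m)} · f(l) ≤ ∑_{l} p_l^{(L_j)} · f(l). -/

import Mathlib

/-!
Writing `E_L f = ∑' l, pnb p L l * f l`, Pascal's rule gives the first-step recurrence
`pnb p (L+1) (l+1) = p * pnb p L l + (1-p) * pnb p (L+1) l` (condition on the first trial). Hence
`E_{L+1} f = p * E_L (f ∘ succ) + (1-p) * E_{L+1} (f ∘ succ)`.
For monotone `f` we have `E_{L+1} f ≤ E_{L+1} (f ∘ succ)`, so the recurrence forces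
`E_L f ≤ E_L (f ∘ succ) ≤ E_{L+1} f`, and the theorem follows by induction on `Lj`.
-/

/-- Shifted negative-binomial pmf. -/
noncomputable def pnb (p : ℝ) (L l : ℕ) : ℝ :=
  if L ≤ l then ((l - 2).choose (L - 2) : ℝ) * p ^ (L - 1) * (1 - p) ^ (l - L) else 0

variable {p : ℝ}

lemma pnb_nonneg (hp0 : 0 ≤ p) (hp1 : p ≤ 1) (L l : ℕ) : 0 ≤ pnb p L l := by
  unfold pnb
  split_ifs
  · have : 0 ≤ 1 - p := by linarith
    positivity
  · rfl

lemma pnb_add_self {L : ℕ} (hL : 2 ≤ L) (n : ℕ) :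
    pnb p L (n + L) = ((n + (L - 2)).choose (L - 2) : ℝ) * p ^ (L - 1) * (1 - p) ^ n := by
  rw [pnb, if_pos (Nat.le_add_left L n), Nat.add_sub_cancel, Nat.add_sub_assoc hL]

lemma summable_pnb (hp : ‖1 - p‖ < 1) {L : ℕ} (hL : 2 ≤ L) : Summable (pnb p L) := by
  rw [← summable_nat_add_iff L]
  simp_rw [pnb_add_self hL, mul_right_comm _ (p ^ (L - 1))]
  exact (summable_choose_mul_geometric_of_norm_lt_one (L - 2) hp).mul_right _

lemma summable_pnb_mul (hp0 : 0 < p) (hp1 : p ≤ 1) {L : ℕ} (hL : 2 ≤ L) {f : ℕ → ℝ} {M : ℝ}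
    (hM : ∀ l, |f l| ≤ M) : Summable fun l => pnb p L l * f l := by
  have hp : ‖1 - p‖ < 1 := by rw [Real.norm_eq_abs, abs_lt]; constructor <;> linarith
  refine ((summable_pnb hp hL).mul_right M).of_norm_bounded fun l => ?_
  rw [norm_mul, Real.norm_of_nonneg (pnb_nonneg hp0.le hp1 L l)]
  exact mul_le_mul_of_nonneg_left (hM l) (pnb_nonneg hp0.le hp1 L l)

lemma pnb_succ_succ {L : ℕ} (hL : 2 ≤ L) (l : ℕ) :
    pnb p (L + 1) (l + 1) = p * pnb p L l + (1 - p) * pnb p (L + 1) l := by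
  obtain ⟨r, rfl⟩ := Nat.exists_eq_add_of_le' hL
  rcases lt_or_ge l (r + 2) with hl | hl
  · simp [pnb, hl.not_ge, show ¬r + 2 + 1 ≤ l by omega]
  obtain ⟨n, rfl⟩ := Nat.exists_eq_add_of_le hl
  rcases n with _ | n
  · simp [pnb, pow_succ]
    ring
  · simp [pnb, show r + 2 + 1 ≤ r + 2 + (n + 1) by omega,
      show r + 2 + (n + 1) + 1 - 2 = r + n + 1 + 1 by omega,
      show r + 2 + (n + 1) - 2 = r + n + 1 by omega,
      show r + 2 + (n + 1) + 1 - (r + 2 + 1) = n + 1 by omega,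
      show r + 2 + (n + 1) - (r + 2 + 1) = n by omega, Nat.choose_succ_succ', pow_succ]
    ring

section Expectation

variable {f : ℕ → ℝ} {M : ℝ}

lemma tsum_pnb_succ_mul (hp0 : 0 < p) (hp1 : p ≤ 1) (hM : ∀ l, |f l| ≤ M) {L : ℕ} (hL : 2 ≤ L) :
    ∑' l, pnb p (L + 1) l * f l
      = p * ∑' l, pnb p L l * f (l + 1) + (1 - p) * ∑' l, pnb p (L + 1) l * f (l + 1) := by
  have hA := summable_pnb_mul hp0 hp1 hL fun l => hM (l + 1)
  have hB := summable_pnb_mul hp0 hp1 (L := L + 1) (by omega) fun l => hM (l + 1)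
  rw [(summable_pnb_mul hp0 hp1 (by omega) hM).tsum_eq_zero_add]
  simp only [pnb_succ_succ hL, add_mul, mul_assoc]
  rw [(hA.mul_left p).tsum_add (hB.mul_left _), hA.tsum_mul_left, hB.tsum_mul_left]
  simp [pnb]

lemma tsum_pnb_mul_le_tsum_pnb_mul_succ (hp0 : 0 < p) (hp1 : p ≤ 1) (hM : ∀ l, |f l| ≤ M)
    (hf : Monotone f) {L : ℕ} (hL : 2 ≤ L) :
    ∑' l, pnb p L l * f l ≤ ∑' l, pnb p L l * f (l + 1) :=
  (summable_pnb_mul hp0 hp1 hL hM).tsum_le_tsum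
    (fun l => mul_le_mul_of_nonneg_left (hf l.le_succ) (pnb_nonneg hp0.le hp1 L l))
    (summable_pnb_mul hp0 hp1 hL fun l => hM (l + 1))

lemma tsum_pnb_mul_le_tsum_pnb_succ_mul (hp0 : 0 < p) (hp1 : p ≤ 1) (hM : ∀ l, |f l| ≤ M)
    (hf : Monotone f) {L : ℕ} (hL : 2 ≤ L) :
    ∑' l, pnb p L l * f l ≤ ∑' l, pnb p (L + 1) l * f l := by
  have hrec := tsum_pnb_succ_mul hp0 hp1 hM hL
  have hshift := tsum_pnb_mul_le_tsum_pnb_mul_succ hp0 hp1 hM hf hL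
  have hshift' := tsum_pnb_mul_le_tsum_pnb_mul_succ hp0 hp1 hM hf (L := L + 1) (by omega)
  have hq : 0 ≤ 1 - p := by linarith
  refine hshift.trans (le_of_mul_le_mul_left ?_ hp0)
  linarith [mul_le_mul_of_nonneg_left hshift' hq]

end Expectation

/-- Expectations of nondecreasing bounded functions are ordered according to
the stochastic dominance of the shifted negative-binomial pmfs. -/
theorem pnb_expectation_monotone (p : ℝ) (hp0 : 0 < p) (hp1 : p ≤ 1)
    (Lm Lj : ℕ) (hLm : 2 ≤ Lm) (hml : Lm ≤ Lj)
    (f : ℕ → ℝ) (hf : Monotone f) (hbdd : ∃ M : ℝ, ∀ l, |f l| ≤ M) :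
    ∑' l : ℕ, pnb p Lm l * f l ≤ ∑' l : ℕ, pnb p Lj l * f l := by
  obtain ⟨M, hM⟩ := hbdd
  induction Lj, hml using Nat.le_induction with
  | base => exact le_rfl
  | succ L hL ih => exact ih.trans (tsum_pnb_mul_le_tsum_pnb_succ_mul hp0 hp1 hM hf (by omega))
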